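/- arXiv:1505.01358 — 2 statements merged into one kernel-verified Lean document; each statement's English description precedes it below -/
import Mathlib

section
/- Let I be an ideal of the multilinear polynomial ring, let T be a term irreducible modulo I, and let ρ be any partial assignment of some of the variables of T to values in the field such that the restricted term T|ρ is nonzero. Then T|ρ is also irreducible modulo I. -/
/-!
Suppose `b·x^(S∖D)`, with `b = a·∏_{x∈D} ρ(x)`, were the leading term of some `Q ∈ I`.
Multiplying `Q` by `(a/b)·x^D` and multilinearizing gives a member of `I` in which each term
`x^m` of `Q` becomes `x^(D ∪ m)`. As `D` is disjoint from `S∖D`, the admissibility of the order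
keeps every other term strictly below `x^S`, so `a·x^S` would be a leading term of `I`.
-/

attribute [local instance] Classical.propDecidable

/-- A literal is a variable together with a polarity (`true` = positive). -/
abbrev Clause (σ : Type) := Finset (σ × Bool)

/-- A CNF formula is a finite set of clauses. -/
abbrev CNF (σ : Type) := Finset (Clause σ)

/-- The variables occurring in a clause. -/
def clauseVars {σ : Type} [DecidableEq σ] (C : Clause σ) : Finset σ := C.image Prod.fst

/-- The variables occurring in a CNF formula. -/
def cnfVars {σ : Type} [DecidableEq σ] (φ : CNF σ) : Finset σ := φ.sup clauseVars

/-- A (total) assignment satisfies a literal. -/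
def litSat {σ : Type} (α : σ → Bool) (l : σ × Bool) : Prop := α l.1 = l.2

/-- A (total) assignment satisfies a clause. -/
def clauseSat {σ : Type} (α : σ → Bool) (C : Clause σ) : Prop := ∃ l ∈ C, litSat α l

/-- A (total) assignment satisfies a CNF formula. -/
def cnfSat {σ : Type} (α : σ → Bool) (φ : CNF σ) : Prop := ∀ C ∈ φ, clauseSat α C

/-- Multilinearization: replace every exponent by its minimum with `1`. -/
noncomputable def mlin {σ 𝔽 : Type} [CommRing 𝔽] (p : MvPolynomial σ 𝔽) :
    MvPolynomial σ 𝔽 :=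
  ∑ m ∈ p.support,
    MvPolynomial.monomial (Finsupp.mapRange (fun e => min e 1) (by simp) m) (p.coeff m)

/-- The polynomial translation of a clause: identifying true with `0`, the clause
`⋁_{x∈L⁺} x ∨ ⋁_{y∈L⁻} ¬y` becomes `∏_{x∈L⁺} x · ∏_{y∈L⁻} (1 - y)`. -/
noncomputable def clausePoly {σ : Type} (𝔽 : Type) [CommRing 𝔽] (C : Clause σ) :
    MvPolynomial σ 𝔽 :=
  ∏ l ∈ C, if l.2 then MvPolynomial.X l.1 else 1 - MvPolynomial.X l.1
/-- An admissible total order on multilinear monomials (identified with finite sets of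
variables): a strict linear order in which lower-degree monomials come first and which is
compatible with multiplication by monomials on disjoint sets of variables. -/
structure AdmissibleOrder (σ : Type) [DecidableEq σ] where
  lt : Finset σ → Finset σ → Prop
  irrefl : ∀ S, ¬ lt S S
  trans : ∀ {S T U : Finset σ}, lt S T → lt T U → lt S U
  total : ∀ S T, S ≠ T → lt S T ∨ lt T S
  degree_lt : ∀ S T : Finset σ, S.card < T.card → lt S T
  mul_lt : ∀ S T m : Finset σ, lt S T → Disjoint m (S ∪ T) → lt (m ∪ S) (m ∪ T)

/-- `T` is the leading term of `Q` with respect to the admissible order `ord`. -/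
def IsLeadTerm {σ 𝔽 : Type} [DecidableEq σ] [CommRing 𝔽] (ord : AdmissibleOrder σ)
    (Q T : MvPolynomial σ 𝔽) : Prop :=
  ∃ m ∈ Q.support, T = MvPolynomial.monomial m (Q.coeff m) ∧
    ∀ m' ∈ Q.support, m' ≠ m → ord.lt m'.support m.support

/-- A term `T` is reducible modulo a set `I` of polynomials if `T` is the leading term of
some member of `I`. -/
def Reducible {σ 𝔽 : Type} [DecidableEq σ] [CommRing 𝔽] (ord : AdmissibleOrder σ)
    (I : Set (MvPolynomial σ 𝔽)) (T : MvPolynomial σ 𝔽) : Prop :=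
  ∃ Q ∈ I, IsLeadTerm ord Q T

/-- `R` is the reduction of `P` modulo `I`: `R` is multilinear, `P - R ∈ I`, and every term
of `R` is irreducible modulo `I`. -/
def IsReduction {σ 𝔽 : Type} [DecidableEq σ] [CommRing 𝔽] (ord : AdmissibleOrder σ)
    (I : Set (MvPolynomial σ 𝔽)) (P R : MvPolynomial σ 𝔽) : Prop :=
  mlin R = R ∧ P - R ∈ I ∧
    ∀ m ∈ R.support, ¬ Reducible ord I (MvPolynomial.monomial m (R.coeff m))

/-- The reduction operator `R_I` modulo `I` (well defined on multilinear polynomials when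
`I` is an ideal of the multilinear ring). -/
noncomputable def redOp {σ 𝔽 : Type} [DecidableEq σ] [CommRing 𝔽] (ord : AdmissibleOrder σ)
    (I : Set (MvPolynomial σ 𝔽)) (P : MvPolynomial σ 𝔽) : MvPolynomial σ 𝔽 :=
  if h : ∃ R, IsReduction ord I P R then h.choose else 0

/-- A subset of the multilinear polynomial ring is an ideal of that ring: it consists of
multilinear polynomials, contains `0`, and is closed under addition and under multiplication
(followed by multilinearization) by arbitrary polynomials. -/
def IsMLIdeal {σ 𝔽 : Type} [CommRing 𝔽] (I : Set (MvPolynomial σ 𝔽)) : Prop :=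
  0 ∈ I ∧ (∀ p ∈ I, mlin p = p) ∧ (∀ p ∈ I, ∀ q ∈ I, p + q ∈ I) ∧
    (∀ p ∈ I, ∀ q : MvPolynomial σ 𝔽, mlin (q * p) ∈ I)

/-- The multilinear (squarefree) monomial with support `m`. -/
noncomputable def monoOf {σ : Type} [DecidableEq σ] (m : Finset σ) : σ →₀ ℕ :=
  ∑ x ∈ m, Finsupp.single x 1

open MvPolynomial

section Monomials

variable {σ : Type} [DecidableEq σ]

lemma monoOf_apply (S : Finset σ) (x : σ) : monoOf S x = if x ∈ S then 1 else 0 := by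
  simp [monoOf, Finsupp.finsetSum_apply, Finsupp.single_apply]

@[simp]
lemma support_monoOf (S : Finset σ) : (monoOf S).support = S := by
  ext x
  by_cases hx : x ∈ S <;> simp [monoOf_apply, hx]

lemma mapRange_min_one_monoOf_add (D : Finset σ) (m : σ →₀ ℕ) :
    Finsupp.mapRange (fun e => min e 1) (by simp) (monoOf D + m) = monoOf (D ∪ m.support) := by
  ext x
  by_cases hx : x ∈ D <;> by_cases hm : m x = 0 <;> simp [monoOf_apply, hx, hm]
  omega

end Monomials

namespace AdmissibleOrder

variable {σ : Type} [DecidableEq σ] (ord : AdmissibleOrder σ)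

lemma not_lt_of_lt {S T : Finset σ} (h : ord.lt S T) : ¬ ord.lt T S :=
  fun h' => ord.irrefl S (ord.trans h h')

lemma card_le_of_lt {S T : Finset σ} (h : ord.lt S T) : S.card ≤ T.card :=
  not_lt.mp fun hc => ord.not_lt_of_lt h (ord.degree_lt _ _ hc)

/-- Unlike `mul_lt`, `D` may meet `M`: the overlap only lowers the degree of `D ∪ M`. -/
lemma union_lt_union {D M E : Finset σ} (hlt : ord.lt M E) (hDE : Disjoint D E) :
    ord.lt (D ∪ M) (D ∪ E) := by
  by_cases hDM : Disjoint D M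
  · exact ord.mul_lt M E D hlt (Finset.disjoint_union_right.mpr ⟨hDM, hDE⟩)
  · apply ord.degree_lt
    have hcard : (D ∪ M).card < D.card + M.card := by
      rw [← Finset.card_union_add_card_inter]
      exact Nat.lt_add_of_pos_right
        (Finset.card_pos.mpr (Finset.not_disjoint_iff_nonempty_inter.mp hDM))
    rw [Finset.card_union_of_disjoint hDE]
    exact hcard.trans_le (Nat.add_le_add_left (ord.card_le_of_lt hlt) _)

end AdmissibleOrder

section Multilinearization

variable {σ R : Type} [DecidableEq σ] [CommRing R]

omit [DecidableEq σ] in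
lemma mlin_eq_sum_of_support_subset (p : MvPolynomial σ R) {s : Finset (σ →₀ ℕ)}
    (h : p.support ⊆ s) :
    mlin p = ∑ m ∈ s, monomial (Finsupp.mapRange (fun e => min e 1) (by simp) m) (p.coeff m) :=
  Finset.sum_subset h fun m _ hm => by simp [notMem_support_iff.mp hm]

lemma mlin_monomial_mul (D : Finset σ) (c : R) (p : MvPolynomial σ R) :
    mlin (monomial (monoOf D) c * p) =
      ∑ m ∈ p.support, monomial (monoOf (D ∪ m.support)) (c * p.coeff m) := by
  have hsupp : (monomial (monoOf D) c * p).support ⊆ p.support.image (monoOf D + ·) := by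
    intro μ hμ
    obtain ⟨ν, hν, m, hm, rfl⟩ := Finset.mem_add.mp (support_mul _ _ hμ)
    rw [Finset.mem_singleton.mp (support_monomial_subset hν)]
    exact Finset.mem_image_of_mem _ hm
  rw [mlin_eq_sum_of_support_subset _ hsupp, Finset.sum_image fun _ _ _ _ => add_left_cancel]
  refine Finset.sum_congr rfl fun m _ => ?_
  rw [mapRange_min_one_monoOf_add, coeff_monomial_mul]

lemma IsLeadTerm.mlin_monomial_mul [NoZeroDivisors R] {ord : AdmissibleOrder σ}
    {Q : MvPolynomial σ R} {E D : Finset σ} {b c : R}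
    (hlead : IsLeadTerm ord Q (monomial (monoOf E) b)) (hDE : Disjoint D E) (hc : c ≠ 0) :
    IsLeadTerm ord (mlin (monomial (monoOf D) c * Q)) (monomial (monoOf (D ∪ E)) (c * b)) := by
  obtain ⟨m₀, hm₀, hT, hmax⟩ := hlead
  obtain ⟨rfl, rfl⟩ : monoOf E = m₀ ∧ b = Q.coeff m₀ := by
    rcases (monomial_eq_monomial_iff _ _ _ _).mp hT with h | ⟨-, h⟩
    · exact h
    · exact absurd h (mem_support_iff.mp hm₀)
  have hlt : ∀ m ∈ Q.support, m ≠ monoOf E → ord.lt (D ∪ m.support) (D ∪ E) := fun m hm hne =>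
    ord.union_lt_union (by simpa using hmax m hm hne) hDE
  have hcoeff : (mlin (monomial (monoOf D) c * Q)).coeff (monoOf (D ∪ E)) =
      c * Q.coeff (monoOf E) := by
    rw [_root_.mlin_monomial_mul, coeff_sum, Finset.sum_eq_single (monoOf E)]
    · simp
    · intro m hm hne
      rw [coeff_monomial, if_neg]
      intro heq
      have := hlt m hm hne
      rw [← support_monoOf (D ∪ m.support), heq, support_monoOf] at this
      exact ord.irrefl _ this
    · exact fun h => absurd hm₀ h
  refine ⟨monoOf (D ∪ E), ?_, by rw [hcoeff], fun μ hμ hne => ?_⟩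
  · rw [mem_support_iff, hcoeff]
    exact mul_ne_zero hc (mem_support_iff.mp hm₀)
  · rw [_root_.mlin_monomial_mul] at hμ
    obtain ⟨m, hm, hμm⟩ := Finset.mem_biUnion.mp (support_sum hμ)
    rw [Finset.mem_singleton.mp (support_monomial_subset hμm)] at hne ⊢
    have hmne : m ≠ monoOf E := by rintro rfl; simp at hne
    simpa using hlt m hm hmne

lemma Reducible.mlin_monomial_mul [NoZeroDivisors R] {ord : AdmissibleOrder σ}
    {I : Set (MvPolynomial σ R)} (hI : ∀ p ∈ I, ∀ q : MvPolynomial σ R, mlin (q * p) ∈ I)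
    {E D : Finset σ} {b c : R} (hred : Reducible ord I (monomial (monoOf E) b))
    (hDE : Disjoint D E) (hc : c ≠ 0) :
    Reducible ord I (monomial (monoOf (D ∪ E)) (c * b)) :=
  let ⟨Q, hQ, hlead⟩ := hred
  ⟨_, hI Q hQ _, hlead.mlin_monomial_mul hDE hc⟩

end Multilinearization

theorem stmt3_general {𝔽 σ : Type} [Field 𝔽] [DecidableEq σ]
    (ord : AdmissibleOrder σ) (I : Set (MvPolynomial σ 𝔽)) (hI : IsMLIdeal I)
    (a : 𝔽) (S : Finset σ)
    (hirr : ¬ Reducible ord I (MvPolynomial.monomial (monoOf S) a))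
    (D : Finset σ) (hD : D ⊆ S) (ρ : σ → 𝔽)
    (hnz : a * ∏ x ∈ D, ρ x ≠ 0) :
    ¬ Reducible ord I (MvPolynomial.monomial (monoOf (S \ D)) (a * ∏ x ∈ D, ρ x)) := by
  intro hred
  apply hirr
  have h := hred.mlin_monomial_mul hI.2.2.2 Finset.disjoint_sdiff
    (mul_ne_zero (left_ne_zero_of_mul hnz) (inv_ne_zero hnz))
  rwa [Finset.union_sdiff_of_subset hD, inv_mul_cancel_right₀ hnz] at h

/-- if the term `T = a·∏_{x∈S} x` is irreducible modulo an ideal `I` of the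
multilinear ring, and `ρ` is a partial assignment to a subset `D ⊆ S` of the variables of
`T` such that the restricted term `T|ρ = (a·∏_{x∈D} ρ(x))·∏_{x∈S∖D} x` is nonzero, then
`T|ρ` is also irreducible modulo `I`. -/
theorem stmt3 {𝔽 σ : Type} [Field 𝔽] [Fintype σ] [DecidableEq σ]
    (ord : AdmissibleOrder σ) (I : Set (MvPolynomial σ 𝔽)) (hI : IsMLIdeal I)
    (a : 𝔽) (ha : a ≠ 0) (S : Finset σ)
    (hirr : ¬ Reducible ord I (MvPolynomial.monomial (monoOf S) a))
    (D : Finset σ) (hD : D ⊆ S) (ρ : σ → 𝔽)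
    (hnz : a * ∏ x ∈ D, ρ x ≠ 0) :
    ¬ Reducible ord I (MvPolynomial.monomial (monoOf (S \ D)) (a * ∏ x ∈ D, ρ x)) :=
  stmt3_general ord I hI a S hirr D hD ρ hnz
end

section
/- Let (𝔉,𝒱)_E be an (𝔉,𝒱)_E-structure and T a term. Suppose 𝔉' ⊆ 𝔉 satisfies Sup_s(T) ⊆ 𝔉' and |𝔉'| ≤ s. Then for every term T' with N(T') ⊆ N(Sup_s(T)) ∪ N(T), if T' is reducible modulo the ideal I(𝔉'∧E), then T' is also reducible modulo the ideal I(Sup_s(T)∧E). -/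
attribute [local instance] Classical.propDecidable

/-- A partial assignment with domain `D` and values `α` respects the CNF formula `E`:
every clause of `E` sharing a variable with `D` is satisfied by the assignment (via a
literal whose variable lies in `D`). -/
def Respects {σ : Type} [DecidableEq σ] (D : Finset σ) (α : σ → Bool) (E : CNF σ) : Prop :=
  ∀ C ∈ E, (clauseVars C ∩ D).Nonempty → ∃ l ∈ C, l.1 ∈ D ∧ α l.1 = l.2

/-- A variable set `V` respects `E` if some assignment with domain `V` respects `E`. -/
def VRespects {σ : Type} [DecidableEq σ] (V : Finset σ) (E : CNF σ) : Prop :=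
  ∃ α : σ → Bool, Respects V α E

/-- The formula `F` is respectfully satisfiable by the variable set `V` (with respect to
`E`): some assignment with domain `V` satisfies `F` and respects `E`. -/
def RSat {σ : Type} [DecidableEq σ] (E F : CNF σ) (V : Finset σ) : Prop :=
  ∃ α : σ → Bool, Respects V α E ∧ ∀ C ∈ F, ∃ l ∈ C, l.1 ∈ V ∧ α l.1 = l.2

/-- An `(𝔉,𝒱)_E`-structure: a CNF formula `Ecnf`, a family `fam` of CNF formulas, and a
family `vfam` of variable sets, each respecting `Ecnf`. -/
structure FVStructure (σ : Type) [DecidableEq σ] where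
  Ecnf : CNF σ
  fam : Finset (CNF σ)
  vfam : Finset (Finset σ)
  vfam_respects : ∀ V ∈ vfam, VRespects V Ecnf

/-- `F` and `V` are neighbours: they share a variable. -/
def Nbr {σ : Type} [DecidableEq σ] (F : CNF σ) (V : Finset σ) : Prop :=
  (cnfVars F ∩ V).Nonempty

/-- `F` and `V` are respectful neighbours. -/
def RNbr {σ : Type} [DecidableEq σ] (E F : CNF σ) (V : Finset σ) : Prop :=
  Nbr F V ∧ RSat E F V

/-- The respectful boundary of a subfamily `𝔛 ⊆ fam`: all `V ∈ vfam` that are a respectful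
neighbour of some `F ∈ 𝔛` and not a neighbour of any other member of `𝔛`. -/
noncomputable def rbdry {σ : Type} [DecidableEq σ] (S : FVStructure σ)
    (𝔛 : Finset (CNF σ)) : Finset (Finset σ) :=
  S.vfam.filter fun V =>
    ∃ F ∈ 𝔛, RNbr S.Ecnf F V ∧ ∀ F' ∈ 𝔛, F' ≠ F → ¬ Nbr F' V

/-- A respectful `(s,δ,ξ)`-boundary expander. -/
def IsRBExpander {σ : Type} [DecidableEq σ] (S : FVStructure σ) (s : ℕ) (δ ξ : ℝ) : Prop :=
  ∀ 𝔛 ⊆ S.fam, 𝔛.card ≤ s → δ * (𝔛.card : ℝ) - ξ ≤ ((rbdry S 𝔛).card : ℝ)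

/-- `𝔛` is `(s,𝒱')`-contained: `𝔛 ⊆ fam`, `|𝔛| ≤ s` and `∂(𝔛) ⊆ 𝒱'`. -/
def Contained {σ : Type} [DecidableEq σ] (S : FVStructure σ) (s : ℕ)
    (𝒱' : Finset (Finset σ)) (𝔛 : Finset (CNF σ)) : Prop :=
  𝔛 ⊆ S.fam ∧ 𝔛.card ≤ s ∧ rbdry S 𝔛 ⊆ 𝒱'

/-- The `s`-support of `𝒱'`: the union of all `(s,𝒱')`-contained subsets of `fam`. -/
noncomputable def suppV {σ : Type} [DecidableEq σ] (S : FVStructure σ) (s : ℕ)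
    (𝒱' : Finset (Finset σ)) : Finset (CNF σ) :=
  S.fam.filter fun F => ∃ 𝔛, Contained S s 𝒱' 𝔛 ∧ F ∈ 𝔛

/-- The overlap of a family of variable sets: the maximum number of sets that contain any
single variable. -/
noncomputable def overlap {σ : Type} [Fintype σ] [DecidableEq σ]
    (𝒱 : Finset (Finset σ)) : ℕ :=
  Finset.univ.sup fun x : σ => (𝒱.filter fun V => x ∈ V).card

/-- The neighbourhood `N(T)` of a (multilinear) monomial `m`: all `V ∈ vfam` meeting it. -/
noncomputable def nbrsM {σ : Type} [DecidableEq σ] (S : FVStructure σ) (m : Finset σ) :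
    Finset (Finset σ) :=
  S.vfam.filter fun V => (m ∩ V).Nonempty

/-- The neighbourhood of a subfamily `𝔛 ⊆ fam`. -/
noncomputable def nbrsF {σ : Type} [DecidableEq σ] (S : FVStructure σ)
    (𝔛 : Finset (CNF σ)) : Finset (Finset σ) :=
  S.vfam.filter fun V => ∃ F ∈ 𝔛, (cnfVars F ∩ V).Nonempty

/-- The `s`-support `Sup_s(T)` of a term with monomial `m`, i.e. `Sup_s(N(T))`. -/
noncomputable def suppM {σ : Type} [DecidableEq σ] (S : FVStructure σ) (s : ℕ)
    (m : Finset σ) : Finset (CNF σ) :=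
  suppV S s (nbrsM S m)

/-- All clauses of the CNF formula `𝔛 ∧ E`. -/
noncomputable def clausesOf {σ : Type} [DecidableEq σ] (S : FVStructure σ)
    (𝔛 : Finset (CNF σ)) : CNF σ :=
  𝔛.sup id ∪ S.Ecnf
/-- The ideal `I(𝔛 ∧ E)` of the multilinear ring generated by the polynomial translations
of all clauses of the formulas in `𝔛` together with all clauses of `E`. -/
def idealOf {σ : Type} (𝔽 : Type) [Field 𝔽] [DecidableEq σ] (S : FVStructure σ)
    (𝔛 : Finset (CNF σ)) : Set (MvPolynomial σ 𝔽) :=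
  { P | ∃ q : Clause σ → MvPolynomial σ 𝔽,
      P = mlin (∑ C ∈ clausesOf S 𝔛, q C * clausePoly 𝔽 C) }

/-- The neighbourhood `N(P)` of a polynomial: all `V ∈ vfam` meeting a variable of `P`. -/
noncomputable def nbrsP {σ 𝔽 : Type} [DecidableEq σ] [CommRing 𝔽] (S : FVStructure σ)
    (P : MvPolynomial σ 𝔽) : Finset (Finset σ) :=
  S.vfam.filter fun V => (P.vars ∩ V).Nonempty

/-!
Induct on `|𝔛|`. If `𝔛 ≠ Sup_s(T)`, then `𝔛` is not `(s, N(T))`-contained, so its respectful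
boundary has a member `V ∉ N(T)`, seen only by one `F ∈ 𝔛`. Since `Sup_s(T)` is itself
contained, `F ∉ Sup_s(T)`, so `V` avoids `N(Sup_s(T))` as well, hence avoids `T'`. Restricting
by an assignment to `V` that satisfies `F` and respects `E` kills every clause of `F` and of `E`
meeting `V` and fixes every other clause of `𝔛 ∧ E`, so it maps `I(𝔛 ∧ E)` into
`I((𝔛 \ {F}) ∧ E)`. It only shrinks monomials and fixes `T'`, so it preserves `T'` as a leading
term.
-/

open MvPolynomial Finset

section Multilinearization

variable {σ R : Type} [CommRing R]

noncomputable def sqfree (m : σ →₀ ℕ) : σ →₀ ℕ :=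
  Finsupp.mapRange (fun e => min e 1) (by simp) m

theorem sqfree_apply (m : σ →₀ ℕ) (x : σ) : sqfree m x = min (m x) 1 := rfl

theorem support_sqfree (m : σ →₀ ℕ) : (sqfree m).support = m.support := by
  ext x
  simp only [Finsupp.mem_support_iff, sqfree_apply]
  omega

theorem sqfree_filter (p : σ → Prop) [DecidablePred p] (m : σ →₀ ℕ) :
    sqfree (m.filter p) = (sqfree m).filter p := by
  ext x
  simp only [sqfree_apply, Finsupp.filter_apply]
  split_ifs <;> rfl

theorem mlin_eq_mapDomain (p : MvPolynomial σ R) :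
    mlin p = AddMonoidAlgebra.mapDomain sqfree p := by
  rw [mlin, AddMonoidAlgebra.mapDomain, Finsupp.mapDomain, AddMonoidAlgebra.ofCoeff_finsuppSum]
  rfl

theorem mlin_add (p q : MvPolynomial σ R) : mlin (p + q) = mlin p + mlin q := by
  simp only [mlin_eq_mapDomain, AddMonoidAlgebra.mapDomain_add]

theorem mlin_monomial (m : σ →₀ ℕ) (c : R) : mlin (monomial m c) = monomial (sqfree m) c := by
  rw [mlin_eq_mapDomain]
  exact AddMonoidAlgebra.mapDomain_single

end Multilinearization

section PartialEvaluation

variable {σ R : Type} [DecidableEq σ] [CommRing R]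

noncomputable def partialEval (V : Finset σ) (ε : σ → R) : MvPolynomial σ R →+* MvPolynomial σ R :=
  eval₂Hom C fun x => if x ∈ V then C (ε x) else X x

variable (V : Finset σ) (ε : σ → R)

theorem partialEval_monomial (m : σ →₀ ℕ) (c : R) :
    partialEval V ε (monomial m c) =
      monomial (m.filter (· ∉ V)) (c * ∏ x ∈ m.support with x ∈ V, ε x ^ m x) := by
  have hX : ∏ x ∈ m.support with x ∉ V, (X x : MvPolynomial σ R) ^ m x =
      monomial (m.filter (· ∉ V)) 1 := by
    rw [monomial_eq, C_1, one_mul, Finsupp.prod_filter_index, Finsupp.support_filter]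
  have hg : ∀ x, (if x ∈ V then C (ε x) else X x) ^ m x =
      if x ∈ V then C (ε x ^ m x) else (X x : MvPolynomial σ R) ^ m x := by
    intro x; split_ifs <;> simp
  rw [partialEval, eval₂Hom_monomial, Finsupp.prod]
  simp only [hg]
  rw [prod_ite, ← map_prod, hX, C_mul_monomial, mul_one, C_mul_monomial]

theorem partialEval_mlin (hε : ∀ x, IsIdempotentElem (ε x)) (p : MvPolynomial σ R) :
    partialEval V ε (mlin p) = mlin (partialEval V ε p) := by
  induction p using MvPolynomial.induction_on' with
  | monomial m c =>
    rw [mlin_monomial, partialEval_monomial, partialEval_monomial, mlin_monomial, sqfree_filter,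
      support_sqfree]
    congr 2
    refine prod_congr rfl fun x hx => ?_
    have hmx : m x ≠ 0 := Finsupp.mem_support_iff.mp (mem_filter.mp hx).1
    rw [sqfree_apply, (hε x).pow_eq hmx, (hε x).pow_eq (by omega)]
  | add p q hp hq => rw [mlin_add, map_add, map_add, mlin_add, hp, hq]

theorem coeff_partialEval (Q : MvPolynomial σ R) (n : σ →₀ ℕ) :
    (partialEval V ε Q).coeff n = ∑ m ∈ Q.support,
      if m.filter (· ∉ V) = n then Q.coeff m * ∏ x ∈ m.support with x ∈ V, ε x ^ m x else 0 := by
  conv_lhs => rw [Q.as_sum]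
  simp only [map_sum, partialEval_monomial, coeff_sum, coeff_monomial]

theorem support_partialEval_subset (Q : MvPolynomial σ R) :
    (partialEval V ε Q).support ⊆ Q.support.image (·.filter (· ∉ V)) := by
  intro n hn
  by_contra h
  refine mem_support_iff.mp hn ?_
  rw [coeff_partialEval]
  exact sum_eq_zero fun m hm => if_neg fun e => h (mem_image.mpr ⟨m, hm, e⟩)

end PartialEvaluation

theorem AdmissibleOrder.lt_of_subset_of_lt {σ : Type} [DecidableEq σ] (ord : AdmissibleOrder σ)
    {S T U : Finset σ} (hST : S ⊆ T) (h : ord.lt T U) : ord.lt S U := by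
  rcases hST.eq_or_ssubset with rfl | hlt
  · exact h
  · exact ord.trans (ord.degree_lt _ _ (card_lt_card hlt)) h

section LeadingTerm

variable {σ R : Type} [DecidableEq σ] [CommRing R]

theorem isLeadTerm_partialEval {ord : AdmissibleOrder σ} {Q : MvPolynomial σ R} {μ : σ →₀ ℕ}
    {a : R} (h : IsLeadTerm ord Q (monomial μ a)) {V : Finset σ} (hμ : Disjoint μ.support V)
    (ε : σ → R) : IsLeadTerm ord (partialEval V ε Q) (monomial μ a) := by
  obtain ⟨m₀, hm₀, heq, hmax⟩ := h
  obtain ⟨rfl, rfl⟩ : μ = m₀ ∧ a = Q.coeff m₀ := by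
    rcases (monomial_eq_monomial_iff ..).mp heq with h | ⟨-, h⟩
    exacts [h, absurd h (mem_support_iff.mp hm₀)]
  have hlt : ∀ m ∈ Q.support, m ≠ μ → ord.lt (m.filter (· ∉ V)).support μ.support :=
    fun m hm hne => ord.lt_of_subset_of_lt
      (by rw [Finsupp.support_filter]; exact filter_subset _ _) (hmax m hm hne)
  have hfix : μ.filter (· ∉ V) = μ :=
    (Finsupp.filter_eq_self_iff _ _).mpr fun x hx =>
      disjoint_left.mp hμ (Finsupp.mem_support_iff.mpr hx)
  have hcoeff : (partialEval V ε Q).coeff μ = Q.coeff μ := by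
    rw [coeff_partialEval, sum_eq_single_of_mem μ hm₀, if_pos hfix,
      filter_false_of_mem fun x hx => disjoint_left.mp hμ hx, prod_empty, mul_one]
    intro m hm hne
    refine if_neg fun e => ord.irrefl μ.support ?_
    simpa only [e] using hlt m hm hne
  refine ⟨μ, mem_support_iff.mpr (hcoeff ▸ mem_support_iff.mp hm₀), by rw [hcoeff],
    fun n hn hne => ?_⟩
  obtain ⟨m, hm, rfl⟩ := mem_image.mp (support_partialEval_subset V ε Q hn)
  exact hlt m hm fun e => hne (e ▸ hfix)

end LeadingTerm

/-- Truth values encoded as in `clausePoly`: `true` is `0`. -/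
def truthValue {σ R : Type} [CommRing R] (α : σ → Bool) (x : σ) : R := if α x then 0 else 1

theorem isIdempotentElem_truthValue {σ R : Type} [CommRing R] (α : σ → Bool) (x : σ) :
    IsIdempotentElem (truthValue α x : R) := by
  unfold truthValue
  split_ifs
  exacts [IsIdempotentElem.zero, IsIdempotentElem.one]

section ClauseIdeals

variable {σ 𝔽 : Type} [DecidableEq σ] [Field 𝔽]

theorem partialEval_clausePoly_eq_zero {V : Finset σ} {α : σ → Bool} {C : Clause σ}
    (hsat : ∃ l ∈ C, l.1 ∈ V ∧ α l.1 = l.2) :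
    partialEval V (truthValue α) (clausePoly 𝔽 C) = 0 := by
  obtain ⟨l, hl, hlV, hlα⟩ := hsat
  rw [clausePoly, map_prod]
  refine prod_eq_zero hl ?_
  cases hb : l.2 <;> simp [partialEval, truthValue, hlV, hlα, hb]

theorem partialEval_clausePoly_of_disjoint {V : Finset σ} (ε : σ → 𝔽) {C : Clause σ}
    (h : Disjoint (clauseVars C) V) : partialEval V ε (clausePoly 𝔽 C) = clausePoly 𝔽 C := by
  rw [clausePoly, map_prod]
  refine prod_congr rfl fun l hl => ?_
  have hlV : l.1 ∉ V := disjoint_left.mp h (mem_image_of_mem _ hl)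
  cases l.2 <;> simp [partialEval, hlV]

theorem partialEval_mem_idealOf {S : FVStructure σ} {𝔛 𝔜 : Finset (CNF σ)} {V : Finset σ}
    {ε : σ → 𝔽} (hε : ∀ x, IsIdempotentElem (ε x))
    (h : ∀ C ∈ clausesOf S 𝔛, partialEval V ε (clausePoly 𝔽 C) = 0 ∨
      C ∈ clausesOf S 𝔜 ∧ partialEval V ε (clausePoly 𝔽 C) = clausePoly 𝔽 C)
    {Q : MvPolynomial σ 𝔽} (hQ : Q ∈ idealOf 𝔽 S 𝔛) : partialEval V ε Q ∈ idealOf 𝔽 S 𝔜 := by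
  obtain ⟨q, rfl⟩ := hQ
  set K := (clausesOf S 𝔛).filter fun C => partialEval V ε (clausePoly 𝔽 C) ≠ 0
  have hK : K ⊆ clausesOf S 𝔜 := fun C hC =>
    ((h C (mem_filter.mp hC).1).resolve_left (mem_filter.mp hC).2).1
  refine ⟨fun C => if C ∈ K then partialEval V ε (q C) else 0, ?_⟩
  rw [partialEval_mlin V ε hε, map_sum]
  congr 1
  calc ∑ C ∈ clausesOf S 𝔛, partialEval V ε (q C * clausePoly 𝔽 C)
      = ∑ C ∈ K, partialEval V ε (q C) * clausePoly 𝔽 C := by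
        rw [sum_filter]
        refine sum_congr rfl fun C hC => ?_
        rw [map_mul]
        by_cases h0 : partialEval V ε (clausePoly 𝔽 C) = 0
        · simp [h0]
        · rw [if_pos h0, ((h C hC).resolve_left h0).2]
    _ = ∑ C ∈ clausesOf S 𝔜, (if C ∈ K then partialEval V ε (q C) else 0) * clausePoly 𝔽 C := by
        simp only [ite_mul, zero_mul]
        rw [← sum_filter, filter_mem_eq_inter, inter_eq_right.mpr hK]

theorem partialEval_clausePoly_cases {S : FVStructure σ} {𝔛 : Finset (CNF σ)} {F : CNF σ}
    {V : Finset σ} {α : σ → Bool} (hresp : Respects V α S.Ecnf)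
    (hF : ∀ C ∈ F, ∃ l ∈ C, l.1 ∈ V ∧ α l.1 = l.2) (hV : ∀ G ∈ 𝔛, G ≠ F → ¬ Nbr G V) :
    ∀ C ∈ clausesOf S 𝔛, partialEval V (truthValue α) (clausePoly 𝔽 C) = 0 ∨
      C ∈ clausesOf S (𝔛.erase F) ∧
        partialEval V (truthValue α) (clausePoly 𝔽 C) = clausePoly 𝔽 C := by
  intro C hC
  by_cases hsat : ∃ l ∈ C, l.1 ∈ V ∧ α l.1 = l.2
  · exact Or.inl (partialEval_clausePoly_eq_zero hsat)
  refine Or.inr ?_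
  rcases mem_union.mp hC with hC𝔛 | hCE
  · obtain ⟨G, hG, hCG⟩ := mem_sup.mp hC𝔛
    have hGF : G ≠ F := by rintro rfl; exact hsat (hF C hCG)
    refine ⟨mem_union_left _ (mem_sup.mpr ⟨G, mem_erase.mpr ⟨hGF, hG⟩, hCG⟩),
      partialEval_clausePoly_of_disjoint _ ?_⟩
    exact disjoint_left.mpr fun x hxC hxV =>
      hV G hG hGF ⟨x, mem_inter.mpr ⟨le_sup (f := clauseVars) hCG hxC, hxV⟩⟩
  · refine ⟨mem_union_right _ hCE, partialEval_clausePoly_of_disjoint _ ?_⟩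
    exact disjoint_left.mpr fun x hxC hxV => hsat (hresp C hCE ⟨x, mem_inter.mpr ⟨hxC, hxV⟩⟩)

theorem reducible_erase_of_rsat {ord : AdmissibleOrder σ} {S : FVStructure σ}
    {𝔛 : Finset (CNF σ)} {F : CNF σ} {V : Finset σ} (hsat : RSat S.Ecnf F V)
    (hV : ∀ G ∈ 𝔛, G ≠ F → ¬ Nbr G V) {μ : σ →₀ ℕ} {a : 𝔽} (hμ : Disjoint μ.support V)
    (hred : Reducible ord (idealOf 𝔽 S 𝔛) (monomial μ a)) :
    Reducible ord (idealOf 𝔽 S (𝔛.erase F)) (monomial μ a) := by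
  obtain ⟨α, hresp, hF⟩ := hsat
  obtain ⟨Q, hQ, hlead⟩ := hred
  exact ⟨partialEval V (truthValue α) Q,
    partialEval_mem_idealOf (isIdempotentElem_truthValue α)
      (partialEval_clausePoly_cases hresp hF hV) hQ,
    isLeadTerm_partialEval hlead hμ _⟩

end ClauseIdeals

section Support

variable {σ : Type} [DecidableEq σ] {S : FVStructure σ} {s : ℕ} {𝒱' : Finset (Finset σ)}

theorem Contained.subset_suppV {𝔛 : Finset (CNF σ)} (h : Contained S s 𝒱' 𝔛) :
    𝔛 ⊆ suppV S s 𝒱' :=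
  fun _ hF => mem_filter.mpr ⟨h.1 hF, 𝔛, h, hF⟩

theorem contained_suppV (hcard : (suppV S s 𝒱').card ≤ s) :
    Contained S s 𝒱' (suppV S s 𝒱') := by
  refine ⟨filter_subset _ _, hcard, fun V hV => ?_⟩
  obtain ⟨hVv, F, hF, hRN, hV⟩ := mem_filter.mp hV
  obtain ⟨-, 𝔜, h𝔜, hF𝔜⟩ := mem_filter.mp hF
  exact h𝔜.2.2 (mem_filter.mpr ⟨hVv, F, hF𝔜, hRN, fun G hG => hV G (h𝔜.subset_suppV hG)⟩)

theorem exists_rsat_of_not_subset_suppV {𝔛 : Finset (CNF σ)} (hfam : 𝔛 ⊆ S.fam)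
    (hcard : 𝔛.card ≤ s) (hsupp : suppV S s 𝒱' ⊆ 𝔛) (hne : ¬ 𝔛 ⊆ suppV S s 𝒱') :
    ∃ F ∈ 𝔛, F ∉ suppV S s 𝒱' ∧ ∃ V ∈ S.vfam, V ∉ 𝒱' ∧ V ∉ nbrsF S (suppV S s 𝒱') ∧
      RSat S.Ecnf F V ∧ ∀ G ∈ 𝔛, G ≠ F → ¬ Nbr G V := by
  obtain ⟨V, hVb, hV𝒱'⟩ := not_subset.mp fun h => hne (Contained.subset_suppV ⟨hfam, hcard, h⟩)
  obtain ⟨hVv, F, hF, hRN, hV⟩ := mem_filter.mp hVb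
  have hFS : F ∉ suppV S s 𝒱' := fun hFS =>
    hV𝒱' ((contained_suppV ((card_le_card hsupp).trans hcard)).2.2
      (mem_filter.mpr ⟨hVv, F, hFS, hRN, fun G hG => hV G (hsupp hG)⟩))
  refine ⟨F, hF, hFS, V, hVv, hV𝒱', fun hVN => ?_, hRN.2, hV⟩
  obtain ⟨-, G, hG, hGV⟩ := mem_filter.mp hVN
  exact hV G (hsupp hG) (by rintro rfl; exact hFS hG) hGV

end Support

theorem monoOf_support {σ : Type} [DecidableEq σ] (m : Finset σ) : (monoOf m).support = m := by
  ext y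
  simp [monoOf, Finsupp.finsetSum_apply, Finsupp.single_apply]

theorem stmt6_general {𝔽 σ : Type} [Field 𝔽] [DecidableEq σ]
    (ord : AdmissibleOrder σ) (S : FVStructure σ) (s : ℕ)
    (mT : Finset σ)
    (𝔛 : Finset (CNF σ)) (hsub : 𝔛 ⊆ S.fam)
    (hsupp : suppM S s mT ⊆ 𝔛) (hcard : 𝔛.card ≤ s)
    (a' : 𝔽) (m' : Finset σ)
    (hN : nbrsM S m' ⊆ nbrsF S (suppM S s mT) ∪ nbrsM S mT)
    (hred : Reducible ord (idealOf 𝔽 S 𝔛) (MvPolynomial.monomial (monoOf m') a')) :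
    Reducible ord (idealOf 𝔽 S (suppM S s mT)) (MvPolynomial.monomial (monoOf m') a') := by
  induction 𝔛 using Finset.strongInduction with
  | H 𝔛 ih =>
    by_cases h𝔛 : 𝔛 ⊆ suppM S s mT
    · rwa [h𝔛.antisymm hsupp] at hred
    obtain ⟨F, hF, hFS, V, hVv, hVT, hVS, hsat, hV⟩ :=
      exists_rsat_of_not_subset_suppV hsub hcard hsupp h𝔛
    have hm'V : Disjoint (monoOf m').support V := by
      rw [monoOf_support]
      refine disjoint_left.mpr fun x hxm hxV => ?_
      rcases mem_union.mp (hN (mem_filter.mpr ⟨hVv, x, mem_inter.mpr ⟨hxm, hxV⟩⟩)) with h | h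
      exacts [hVS h, hVT h]
    exact ih (𝔛.erase F) (erase_ssubset hF) ((erase_subset F 𝔛).trans hsub)
      (fun G hG => mem_erase.mpr ⟨by rintro rfl; exact hFS hG, hsupp hG⟩)
      ((card_le_card (erase_subset F 𝔛)).trans hcard) (reducible_erase_of_rsat hsat hV hm'V hred)

/-- let `T = aT·∏_{x∈mT} x` be a term and suppose `𝔛 ⊆ 𝔉` satisfies
`Sup_s(T) ⊆ 𝔛` and `|𝔛| ≤ s`. Then every term `T' = a'·∏_{x∈m'} x` with
`N(T') ⊆ N(Sup_s(T)) ∪ N(T)` that is reducible modulo `I(𝔛∧E)` is also reducible modulo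
`I(Sup_s(T)∧E)`. -/
theorem stmt6 {𝔽 σ : Type} [Field 𝔽] [Fintype σ] [DecidableEq σ]
    (ord : AdmissibleOrder σ) (S : FVStructure σ) (s : ℕ)
    (aT : 𝔽) (haT : aT ≠ 0) (mT : Finset σ)
    (𝔛 : Finset (CNF σ)) (hsub : 𝔛 ⊆ S.fam)
    (hsupp : suppM S s mT ⊆ 𝔛) (hcard : 𝔛.card ≤ s)
    (a' : 𝔽) (ha' : a' ≠ 0) (m' : Finset σ)
    (hN : nbrsM S m' ⊆ nbrsF S (suppM S s mT) ∪ nbrsM S mT)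
    (hred : Reducible ord (idealOf 𝔽 S 𝔛) (MvPolynomial.monomial (monoOf m') a')) :
    Reducible ord (idealOf 𝔽 S (suppM S s mT)) (MvPolynomial.monomial (monoOf m') a') :=
  stmt6_general ord S s mT 𝔛 hsub hsupp hcard a' m' hN hred
end
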